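/- Let (N,v) be a game, and suppose 𝒫 and 𝒬 are proper partitions of some nonempty S ⊆ N\{s} such that −|𝒬|·v(N) + Σ_{P∈𝒫} v(P) + Σ_{Q∈𝒬} v(N\Q) + (|𝒫|+|𝒬|)·ε > 0 for some ε ∈ ℝ. Then the system {x(R) ≥ v(R)+ε for all nonempty R ⊊ N, x(N)=v(N)} is infeasible, i.e., the least core value ε* satisfies ε* ≤ (|𝒬|·v(N) − Σ_{P∈𝒫} v(P) − Σ_{Q∈𝒬} v(N\Q)) / (|𝒫|+|𝒬|). -/

import Mathlib

/-!
Adding the constraints `x(P) ≥ v(P) + ε` over the blocks of `𝒫` bounds `x(S)` from below, and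
adding the constraints `x(N \ Q) = v(N) - x(Q) ≥ v(N \ Q) + ε` over the blocks of `𝒬` bounds it
from above; `x` cancels and leaves `(|𝒫| + |𝒬|) ε ≤ |𝒬| v(N) - Σ v(P) - Σ v(N \ Q)`, which the
certificate violates. Since `s ∉ S`, every block and every complement of a block is a nonempty
proper coalition, so all these constraints are available.
-/

open Finset

/-- `Ps` is a proper partition of `S`: a family of pairwise disjoint nonempty sets
whose union is `S`. -/
def IsProperPartition {α : Type*} [DecidableEq α] (Ps : Finset (Finset α)) (S : Finset α) : Prop :=
  (∀ P ∈ Ps, P.Nonempty) ∧ (∀ P ∈ Ps, ∀ Q ∈ Ps, P ≠ Q → Disjoint P Q) ∧ Ps.biUnion id = S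

namespace IsProperPartition

variable {α : Type*} [DecidableEq α] {Ps : Finset (Finset α)} {S : Finset α}

theorem subset (hPs : IsProperPartition Ps S) {P : Finset α} (hP : P ∈ Ps) : P ⊆ S :=
  hPs.2.2 ▸ subset_biUnion_of_mem id hP

theorem sum_sum_eq {M : Type*} [AddCommMonoid M] (hPs : IsProperPartition Ps S) (f : α → M) :
    ∑ P ∈ Ps, ∑ i ∈ P, f i = ∑ i ∈ S, f i := by
  rw [← hPs.2.2]
  exact (sum_biUnion (t := id) hPs.2.1).symm

end IsProperPartition

section LeastCore

variable {α : Type*} [Fintype α]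

def LeastCoreFeasible (v : Finset α → ℝ) (ε : ℝ) (x : α → ℝ) : Prop :=
  (∀ R : Finset α, R.Nonempty → R ≠ univ → v R + ε ≤ ∑ i ∈ R, x i) ∧ ∑ i, x i = v univ

variable {v : Finset α → ℝ} {ε : ℝ} {x : α → ℝ} {s : α}

theorem LeastCoreFeasible.le_sum_of_notMem (hx : LeastCoreFeasible v ε x) {P : Finset α}
    (hP : P.Nonempty) (hsP : s ∉ P) : v P + ε ≤ ∑ i ∈ P, x i :=
  hx.1 P hP fun h => hsP (h ▸ mem_univ s)

variable [DecidableEq α]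

theorem LeastCoreFeasible.le_sub_sum_of_notMem (hx : LeastCoreFeasible v ε x) {Q : Finset α}
    (hQ : Q.Nonempty) (hsQ : s ∉ Q) : v (univ \ Q) + ε ≤ v univ - ∑ i ∈ Q, x i := by
  have hcompl : (univ \ Q).Nonempty := ⟨s, by simpa using hsQ⟩
  have hproper : univ \ Q ≠ univ := by
    obtain ⟨a, ha⟩ := hQ
    exact fun h => (mem_sdiff.1 (h.symm ▸ mem_univ a : a ∈ univ \ Q)).2 ha
  have := hx.1 _ hcompl hproper
  rwa [sum_sdiff_eq_sub (subset_univ Q), hx.2] at this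

variable {Ps Qs : Finset (Finset α)} {S : Finset α}

theorem LeastCoreFeasible.sum_le_sum_of_partition (hx : LeastCoreFeasible v ε x)
    (hPs : IsProperPartition Ps S) (hsS : s ∉ S) :
    ∑ P ∈ Ps, v P + Ps.card * ε ≤ ∑ i ∈ S, x i := by
  have := sum_le_sum fun P hP =>
    hx.le_sum_of_notMem (hPs.1 P hP) fun hs => hsS (hPs.subset hP hs)
  rwa [hPs.sum_sum_eq, sum_add_distrib, sum_const, nsmul_eq_mul] at this

theorem LeastCoreFeasible.sum_compl_le_of_partition (hx : LeastCoreFeasible v ε x)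
    (hQs : IsProperPartition Qs S) (hsS : s ∉ S) :
    ∑ Q ∈ Qs, v (univ \ Q) + Qs.card * ε ≤ Qs.card * v univ - ∑ i ∈ S, x i := by
  have := sum_le_sum fun Q hQ =>
    hx.le_sub_sum_of_notMem (hQs.1 Q hQ) fun hs => hsS (hQs.subset hQ hs)
  rwa [sum_sub_distrib, hQs.sum_sum_eq, sum_add_distrib, sum_const, sum_const, nsmul_eq_mul,
    nsmul_eq_mul] at this

theorem LeastCoreFeasible.card_mul_le (hx : LeastCoreFeasible v ε x)
    (hPs : IsProperPartition Ps S) (hQs : IsProperPartition Qs S) (hsS : s ∉ S) :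
    ((Ps.card : ℝ) + Qs.card) * ε
      ≤ Qs.card * v univ - ∑ P ∈ Ps, v P - ∑ Q ∈ Qs, v (univ \ Q) := by
  have hP := hx.sum_le_sum_of_partition hPs hsS
  have hQ := hx.sum_compl_le_of_partition hQs hsS
  linarith

end LeastCore

theorem farkas_certificate_infeasibility_general {α : Type*} [Fintype α] [DecidableEq α]
    (v : Finset α → ℝ) (s : α)
    (S : Finset α) (hS : S ⊆ ({s} : Finset α)ᶜ)
    (Ps Qs : Finset (Finset α))
    (hPs : IsProperPartition Ps S) (hQs : IsProperPartition Qs S)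
    (ε : ℝ)
    (hcert : 0 < -(Qs.card : ℝ) * v Finset.univ + ∑ P ∈ Ps, v P
        + ∑ Q ∈ Qs, v (Finset.univ \ Q) + ((Ps.card : ℝ) + (Qs.card : ℝ)) * ε) :
    (¬ ∃ x : α → ℝ, (∀ R : Finset α, R.Nonempty → R ≠ Finset.univ →
          v R + ε ≤ ∑ i ∈ R, x i) ∧ ∑ i, x i = v Finset.univ) ∧
    (∀ ε' : ℝ, (∃ x : α → ℝ, (∀ R : Finset α, R.Nonempty → R ≠ Finset.univ →
          v R + ε' ≤ ∑ i ∈ R, x i) ∧ ∑ i, x i = v Finset.univ) →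
        ε' ≤ ((Qs.card : ℝ) * v Finset.univ - ∑ P ∈ Ps, v P
          - ∑ Q ∈ Qs, v (Finset.univ \ Q)) / ((Ps.card : ℝ) + (Qs.card : ℝ))) := by
  have hsS : s ∉ S := fun hs => by simpa using hS hs
  have hbound : ∀ ε', (∃ x, LeastCoreFeasible v ε' x) → ((Ps.card : ℝ) + Qs.card) * ε'
      ≤ Qs.card * v univ - ∑ P ∈ Ps, v P - ∑ Q ∈ Qs, v (univ \ Q) :=
    fun ε' ⟨x, hx⟩ => hx.card_mul_le hPs hQs hsS
  -- An empty certificate would make the left side of `hcert` zero.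
  have hcard : (0 : ℝ) < Ps.card + Qs.card := by
    by_contra! h
    have hzero : Ps.card + Qs.card = 0 := by exact_mod_cast h.antisymm (by positivity)
    obtain ⟨rfl, rfl⟩ : Ps = ∅ ∧ Qs = ∅ := by
      simpa only [Nat.add_eq_zero_iff, card_eq_zero] using hzero
    simp at hcert
  refine ⟨fun hfeas => ?_, fun ε' hfeas => (le_div_iff₀ hcard).2 ?_⟩
  · linarith [hbound ε hfeas]
  · linarith [hbound ε' hfeas]

theorem farkas_certificate_infeasibility {α : Type*} [Fintype α] [DecidableEq α]
    (v : Finset α → ℝ) (h0 : v ∅ = 0) (s : α)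
    (S : Finset α) (hSne : S.Nonempty) (hS : S ⊆ ({s} : Finset α)ᶜ)
    (Ps Qs : Finset (Finset α))
    (hPs : IsProperPartition Ps S) (hQs : IsProperPartition Qs S)
    (ε : ℝ)
    (hcert : 0 < -(Qs.card : ℝ) * v Finset.univ + ∑ P ∈ Ps, v P
        + ∑ Q ∈ Qs, v (Finset.univ \ Q) + ((Ps.card : ℝ) + (Qs.card : ℝ)) * ε) :
    (¬ ∃ x : α → ℝ, (∀ R : Finset α, R.Nonempty → R ≠ Finset.univ →
          v R + ε ≤ ∑ i ∈ R, x i) ∧ ∑ i, x i = v Finset.univ) ∧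
    (∀ ε' : ℝ, (∃ x : α → ℝ, (∀ R : Finset α, R.Nonempty → R ≠ Finset.univ →
          v R + ε' ≤ ∑ i ∈ R, x i) ∧ ∑ i, x i = v Finset.univ) →
        ε' ≤ ((Qs.card : ℝ) * v Finset.univ - ∑ P ∈ Ps, v P
          - ∑ Q ∈ Qs, v (Finset.univ \ Q)) / ((Ps.card : ℝ) + (Qs.card : ℝ))) :=
  farkas_certificate_infeasibility_general v s S hS Ps Qs hPs hQs ε hcert
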